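/- Let F̃_r be the equal-radius multi-kernel hypothesis class consisting of all pairs (w, θ) with w_t = (w_t^1,…,w_t^M) ∈ H_1×⋯×H_M satisfying Σ_{m=1}^M ‖w_t^m‖² ≤ R for all t, and θ ∈ ℝ^M with θ_m ≥ 0 and Σ_m θ_m^r ≤ 1; its empirical Rademacher complexity is R̂(F̃_r) = E_σ[ sup_{(w,θ)} (2/(TN)) Σ_{t,i} σ_t^i Σ_m √θ_m ⟨w_t^m, φ_{m,t}^i⟩ ]. Then R̂(F̃_r) = (2√R/(TN)) · E_σ[ sup_{θ ≥ 0, ‖θ‖_r ≤ 1} Σ_{t=1}^T √( Σ_{m=1}^M θ_m ‖Σ_{i=1}^N σ_t^i φ_{m,t}^i‖² ) ], which is the value of the formula for R̂(F_{s,r}) at s* = 1; hence R̂(F̃_r) = sup_{s ≥ 1} R̂(F_{s,r}) = lim_{s→∞} R̂(F_{s,r}), i.e., F̃_r is the s = +∞ member of the family F_{s,r}. -/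

import Mathlib

open scoped BigOperators
open RealInnerProductSpace

noncomputable section

/-- The sign `+1`/`-1` associated with a Boolean, used to realize Rademacher variables. -/
def sgn (b : Bool) : ℝ := if b then 1 else -1

/-- Expectation over i.i.d. Rademacher variables `σ_t^i` (`t = 1,…,T`, `i = 1,…,N`),
realized as the uniform average over all sign patterns. -/
def Eσ (T N : ℕ) (f : (Fin T → Fin N → Bool) → ℝ) : ℝ :=
  (∑ σ : Fin T → Fin N → Bool, f σ) / (Fintype.card (Fin T → Fin N → Bool) : ℝ)

/-- Admissibility of a triple `(w, θ, λ)` for the multi-kernel hypothesis class `F_{s,r}`: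
`θ ⪰ 0` with `‖θ‖_r ≤ 1`, `λ ⪰ 0` with `‖λ‖_s ≤ 1`, and `Σ_m ‖w_t^m‖² ≤ λ_t² R` for all `t`. -/
def MKadm {M T : ℕ} (H : Fin M → Type*) [∀ m, NormedAddCommGroup (H m)]
    [∀ m, InnerProductSpace ℝ (H m)] (s r R : ℝ)
    (w : Fin T → ∀ m, H m) (θ : Fin M → ℝ) (lam : Fin T → ℝ) : Prop :=
  (∀ m, 0 ≤ θ m) ∧ (∑ m, θ m ^ r) ≤ 1 ∧
    (∀ t, 0 ≤ lam t) ∧ (∑ t, lam t ^ s) ≤ 1 ∧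
    ∀ t, (∑ m, ‖w t m‖ ^ 2) ≤ lam t ^ 2 * R

/-- Empirical Rademacher complexity of the multi-kernel hypothesis class `F_{s,r}`, with
respect to the sampled feature vectors `φ_{m,t}^i`. -/
def ERCmk {M : ℕ} (H : Fin M → Type*) [∀ m, NormedAddCommGroup (H m)]
    [∀ m, InnerProductSpace ℝ (H m)] (T N : ℕ)
    (φ : ∀ m, Fin T → Fin N → H m) (s r R : ℝ) : ℝ :=
  Eσ T N (fun σ => sSup {v : ℝ |
    ∃ (w : Fin T → ∀ m, H m) (θ : Fin M → ℝ) (lam : Fin T → ℝ),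
      MKadm H s r R w θ lam ∧
      v = (2 / ((T : ℝ) * N)) *
        ∑ t, ∑ i, sgn (σ t i) * ∑ m, Real.sqrt (θ m) * ⟪w t m, φ m t i⟫})

/-- Empirical Rademacher complexity of the equal-radius multi-kernel class `F̃_r`:
pairs `(w, θ)` with `Σ_m ‖w_t^m‖² ≤ R` for all `t` and `θ ⪰ 0`, `‖θ‖_r ≤ 1`. -/
def ERCtildeR {M : ℕ} (H : Fin M → Type*) [∀ m, NormedAddCommGroup (H m)]
    [∀ m, InnerProductSpace ℝ (H m)] (T N : ℕ)
    (φ : ∀ m, Fin T → Fin N → H m) (r R : ℝ) : ℝ :=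
  Eσ T N (fun σ => sSup {v : ℝ |
    ∃ (w : Fin T → ∀ m, H m) (θ : Fin M → ℝ),
      (∀ m, 0 ≤ θ m) ∧ (∑ m, θ m ^ r) ≤ 1 ∧ (∀ t, (∑ m, ‖w t m‖ ^ 2) ≤ R) ∧
      v = (2 / ((T : ℝ) * N)) *
        ∑ t, ∑ i, sgn (σ t i) * ∑ m, Real.sqrt (θ m) * ⟪w t m, φ m t i⟫})


/-! For fixed signs `σ` and weights `θ`, the supremum over `w` splits into one problem per task
`t`; by Cauchy–Schwarz, with its equality case `w_t^m ∝ √θ_m V_{m,t}`, each equals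
`√R · √(Σ_m θ_m ‖V_{m,t}‖²)`, where `V_{m,t} = Σ_i σ_t^i φ_{m,t}^i`. This gives the formula
for `R̂(F̃_r)`.

Every admissible `λ` satisfies `λ_t ≤ 1`, so `F_{s,r} ⊆ F̃_r`; conversely the uniform choice
`λ_t = T^{-1/s}` shows that `T^{-1/s} F̃_r ⊆ F_{s,r}`. Hence
`T^{-1/s} R̂(F̃_r) ≤ R̂(F_{s,r}) ≤ R̂(F̃_r)`, and `T^{-1/s} → 1` as `s → ∞`. -/

open Filter Topology Pointwise

lemma le_one_of_sum_rpow_le_one {ι : Type*} [Fintype ι] {f : ι → ℝ} {r : ℝ} (hr : 0 < r)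
    (hf : ∀ i, 0 ≤ f i) (hsum : ∑ i, f i ^ r ≤ 1) (i : ι) : f i ≤ 1 := by
  by_contra! h
  have hle : f i ^ r ≤ ∑ j, f j ^ r :=
    Finset.single_le_sum (fun j _ => Real.rpow_nonneg (hf j) r) (Finset.mem_univ i)
  linarith [Real.one_lt_rpow h hr]

lemma eq_sSup_of_tendsto_atTop_of_le {f : ℝ → ℝ} {a b : ℝ} (hle : ∀ s, b ≤ s → f s ≤ a)
    (hf : Tendsto f atTop (𝓝 a)) : a = sSup {v | ∃ s, b ≤ s ∧ v = f s} := by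
  have hbdd : BddAbove {v | ∃ s, b ≤ s ∧ v = f s} := ⟨a, by rintro _ ⟨s, hs, rfl⟩; exact hle s hs⟩
  refine le_antisymm (le_of_tendsto hf ?_) (csSup_le ⟨f b, b, le_rfl, rfl⟩ ?_)
  · exact (eventually_ge_atTop b).mono fun s hs => le_csSup hbdd ⟨s, hs, rfl⟩
  · rintro _ ⟨s, hs, rfl⟩
    exact hle s hs

section WeightedCauchySchwarz

variable {ι : Type*} [Fintype ι] {E : ι → Type*} [∀ i, NormedAddCommGroup (E i)]
  [∀ i, InnerProductSpace ℝ (E i)] {θ : ι → ℝ} {R : ℝ}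

lemma sum_sqrt_mul_inner_le (hθ : ∀ i, 0 ≤ θ i) {w : ∀ i, E i} (V : ∀ i, E i)
    (hw : ∑ i, ‖w i‖ ^ 2 ≤ R) :
    ∑ i, √(θ i) * ⟪w i, V i⟫ ≤ √R * √(∑ i, θ i * ‖V i‖ ^ 2) :=
  calc ∑ i, √(θ i) * ⟪w i, V i⟫ ≤ ∑ i, ‖w i‖ * (√(θ i) * ‖V i‖) :=
        Finset.sum_le_sum fun i _ => by
          nlinarith [real_inner_le_norm (w i) (V i), Real.sqrt_nonneg (θ i)]
    _ ≤ √(∑ i, ‖w i‖ ^ 2) * √(∑ i, (√(θ i) * ‖V i‖) ^ 2) :=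
        Real.sum_mul_le_sqrt_mul_sqrt _ _ _
    _ ≤ √R * √(∑ i, θ i * ‖V i‖ ^ 2) := by
        simp_rw [mul_pow, Real.sq_sqrt (hθ _)]
        gcongr

lemma exists_sum_sqrt_mul_inner_eq (hR : 0 ≤ R) (hθ : ∀ i, 0 ≤ θ i) (V : ∀ i, E i) :
    ∃ w : ∀ i, E i, ∑ i, ‖w i‖ ^ 2 ≤ R ∧
      ∑ i, √(θ i) * ⟪w i, V i⟫ = √R * √(∑ i, θ i * ‖V i‖ ^ 2) := by
  set S := ∑ i, θ i * ‖V i‖ ^ 2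
  rcases (Real.sqrt_nonneg S).eq_or_lt with hS0 | hS0
  · exact ⟨0, by simpa using hR, by simp [← hS0]⟩
  have hS : 0 < S := Real.sqrt_pos.mp hS0
  set c := √R / √S
  refine ⟨fun i => (c * √(θ i)) • V i, ?_, ?_⟩
  · have hnorm : ∑ i, ‖(c * √(θ i)) • V i‖ ^ 2 = c ^ 2 * S := by
      rw [Finset.mul_sum]
      refine Finset.sum_congr rfl fun i _ => ?_
      rw [norm_smul, Real.norm_eq_abs, mul_pow, sq_abs, mul_pow, Real.sq_sqrt (hθ i), mul_assoc]
    rw [hnorm, div_pow, Real.sq_sqrt hR, Real.sq_sqrt hS.le, div_mul_cancel₀ _ hS.ne']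
  · have hinner : ∑ i, √(θ i) * ⟪(c * √(θ i)) • V i, V i⟫ = c * S := by
      rw [Finset.mul_sum]
      refine Finset.sum_congr rfl fun i _ => ?_
      rw [real_inner_smul_left, real_inner_self_eq_norm_sq]
      linear_combination (c * ‖V i‖ ^ 2) * Real.mul_self_sqrt (hθ i)
    rw [hinner, div_mul_eq_mul_div, mul_div_assoc, Real.div_sqrt]

end WeightedCauchySchwarz

lemma Eσ_const_mul (T N : ℕ) (c : ℝ) (f : (Fin T → Fin N → Bool) → ℝ) :
    Eσ T N (fun σ => c * f σ) = c * Eσ T N f := by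
  rw [Eσ, Eσ, ← Finset.mul_sum, mul_div_assoc]

lemma Eσ_mono (T N : ℕ) {f g : (Fin T → Fin N → Bool) → ℝ} (h : ∀ σ, f σ ≤ g σ) :
    Eσ T N f ≤ Eσ T N g :=
  div_le_div_of_nonneg_right (Finset.sum_le_sum fun σ _ => h σ) (Nat.cast_nonneg _)

section MultiKernel

variable {M T N : ℕ} {H : Fin M → Type*} [∀ m, NormedAddCommGroup (H m)]
  [∀ m, InnerProductSpace ℝ (H m)] (φ : ∀ m, Fin T → Fin N → H m) {s r R : ℝ}
  (σ : Fin T → Fin N → Bool)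

def signedSum (m : Fin M) (t : Fin T) : H m :=
  ∑ i, sgn (σ t i) • φ m t i

lemma sum_sgn_mul_sum_inner_eq (w : Fin T → ∀ m, H m) (θ : Fin M → ℝ) :
    ∑ t, ∑ i, sgn (σ t i) * ∑ m, √(θ m) * ⟪w t m, φ m t i⟫
      = ∑ t, ∑ m, √(θ m) * ⟪w t m, signedSum φ σ m t⟫ := by
  simp_rw [signedSum, inner_sum, real_inner_smul_right, Finset.mul_sum]
  exact Finset.sum_congr rfl fun t _ => Finset.sum_comm.trans
    (Finset.sum_congr rfl fun m _ => Finset.sum_congr rfl fun i _ => by ring)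

def tildeValues (r R : ℝ) : Set ℝ :=
  {v : ℝ | ∃ (w : Fin T → ∀ m, H m) (θ : Fin M → ℝ),
    (∀ m, 0 ≤ θ m) ∧ (∑ m, θ m ^ r) ≤ 1 ∧ (∀ t, (∑ m, ‖w t m‖ ^ 2) ≤ R) ∧
    v = (2 / ((T : ℝ) * N)) * ∑ t, ∑ i, sgn (σ t i) * ∑ m, √(θ m) * ⟪w t m, φ m t i⟫}

def mkValues (s r R : ℝ) : Set ℝ :=
  {v : ℝ | ∃ (w : Fin T → ∀ m, H m) (θ : Fin M → ℝ) (lam : Fin T → ℝ),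
    MKadm H s r R w θ lam ∧
    v = (2 / ((T : ℝ) * N)) * ∑ t, ∑ i, sgn (σ t i) * ∑ m, √(θ m) * ⟪w t m, φ m t i⟫}

def thetaValues (r : ℝ) : Set ℝ :=
  {v : ℝ | ∃ θ : Fin M → ℝ, (∀ m, 0 ≤ θ m) ∧ (∑ m, θ m ^ r) ≤ 1 ∧
    v = ∑ t, √(∑ m, θ m * ‖signedSum φ σ m t‖ ^ 2)}

lemma zero_mem_thetaValues (hr : 0 < r) : (0 : ℝ) ∈ thetaValues φ σ r :=
  ⟨0, fun _ => le_rfl, by simp [Real.zero_rpow hr.ne'], by simp⟩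

lemma thetaValues_bddAbove (hr : 0 < r) : BddAbove (thetaValues φ σ r) := by
  refine ⟨∑ t, √(∑ m, ‖signedSum φ σ m t‖ ^ 2), ?_⟩
  rintro _ ⟨θ, hθ, hθr, rfl⟩
  gcongr with t _ m
  exact mul_le_of_le_one_left (by positivity) (le_one_of_sum_rpow_le_one hr hθ hθr m)

lemma exists_mem_smul_thetaValues_ge {x : ℝ} (hx : x ∈ tildeValues φ σ r R) :
    ∃ y ∈ (2 / ((T : ℝ) * N) * √R) • thetaValues φ σ r, x ≤ y := by
  obtain ⟨w, θ, hθ, hθr, hw, rfl⟩ := hx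
  refine ⟨_, Set.smul_mem_smul_set ⟨θ, hθ, hθr, rfl⟩, ?_⟩
  rw [sum_sgn_mul_sum_inner_eq, smul_eq_mul, mul_assoc, Finset.mul_sum _ _ √R]
  gcongr with t
  exact sum_sqrt_mul_inner_le hθ _ (hw t)

lemma smul_thetaValues_subset_tildeValues (hR : 0 ≤ R) :
    (2 / ((T : ℝ) * N) * √R) • thetaValues φ σ r ⊆ tildeValues φ σ r R := by
  rintro _ ⟨_, ⟨θ, hθ, hθr, rfl⟩, rfl⟩
  choose w hw hw_eq using fun t => exists_sum_sqrt_mul_inner_eq hR hθ (signedSum φ σ · t)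
  refine ⟨w, θ, hθ, hθr, hw, ?_⟩
  rw [sum_sgn_mul_sum_inner_eq, Finset.sum_congr rfl fun t _ => hw_eq t, ← Finset.mul_sum]
  exact mul_assoc _ _ _

lemma sSup_tildeValues (hR : 0 ≤ R) :
    sSup (tildeValues φ σ r R) = 2 / ((T : ℝ) * N) * √R * sSup (thetaValues φ σ r) := by
  rw [← smul_eq_mul, ← Real.sSup_smul_of_nonneg (by positivity)]
  exact csSup_eq_csSup_of_forall_exists_le (fun x hx => exists_mem_smul_thetaValues_ge φ σ hx)
    fun y hy => ⟨y, smul_thetaValues_subset_tildeValues φ σ hR hy, le_rfl⟩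

lemma tildeValues_bddAbove (hr : 0 < r) : BddAbove (tildeValues φ σ r R) := by
  obtain ⟨B, hB⟩ := (thetaValues_bddAbove φ σ hr).smul_of_nonneg
    (by positivity : 0 ≤ 2 / ((T : ℝ) * N) * √R)
  refine ⟨B, fun x hx => ?_⟩
  obtain ⟨y, hy, hxy⟩ := exists_mem_smul_thetaValues_ge φ σ hx
  exact hxy.trans (hB hy)

lemma tildeValues_nonempty (hr : 0 < r) (hR : 0 ≤ R) : (tildeValues φ σ r R).Nonempty :=
  (Set.Nonempty.smul_set ⟨0, zero_mem_thetaValues φ σ hr⟩).mono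
    (smul_thetaValues_subset_tildeValues φ σ hR)

lemma mkValues_subset_tildeValues (hs : 0 < s) (hR : 0 ≤ R) :
    mkValues φ σ s r R ⊆ tildeValues φ σ r R := by
  rintro _ ⟨w, θ, lam, ⟨hθ, hθr, hlam, hlams, hw⟩, rfl⟩
  refine ⟨w, θ, hθ, hθr, fun t => (hw t).trans ?_, rfl⟩
  have hlam_sq : lam t ^ 2 ≤ 1 :=
    pow_le_one₀ (hlam t) (le_one_of_sum_rpow_le_one hs hlam hlams t)
  exact mul_le_of_le_one_left hR hlam_sq

lemma rpow_smul_tildeValues_subset_mkValues (hs : s ≠ 0) :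
    (T : ℝ) ^ (-s⁻¹) • tildeValues φ σ r R ⊆ mkValues φ σ s r R := by
  set c := (T : ℝ) ^ (-s⁻¹)
  have hc : 0 ≤ c := by positivity
  have hcs : c ^ s = (T : ℝ)⁻¹ := by
    rw [← Real.rpow_mul (Nat.cast_nonneg T), neg_mul, inv_mul_cancel₀ hs, Real.rpow_neg_one]
  rintro _ ⟨_, ⟨w, θ, hθ, hθr, hw, rfl⟩, rfl⟩
  refine ⟨fun t m => c • w t m, θ, fun _ => c, ⟨hθ, hθr, fun _ => hc, ?_, fun t => ?_⟩, ?_⟩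
  · simpa [hcs] using mul_inv_le_one (a := (T : ℝ))
  · simp_rw [norm_smul, mul_pow, Real.norm_eq_abs, sq_abs, ← Finset.mul_sum]
    exact mul_le_mul_of_nonneg_left (hw t) (sq_nonneg c)
  · simp_rw [smul_eq_mul, real_inner_smul_left, Finset.mul_sum]
    refine Finset.sum_congr rfl fun t _ => Finset.sum_congr rfl fun i _ =>
      Finset.sum_congr rfl fun m _ => by ring

end MultiKernel

section Complexity

variable {M : ℕ} {H : Fin M → Type*} [∀ m, NormedAddCommGroup (H m)]
  [∀ m, InnerProductSpace ℝ (H m)] {T N : ℕ} (φ : ∀ m, Fin T → Fin N → H m) {s r R : ℝ}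

lemma ERCtildeR_eq_mul_Eσ_sSup_thetaValues (hR : 0 ≤ R) :
    ERCtildeR H T N φ r R
      = 2 * √R / ((T : ℝ) * N) * Eσ T N (fun σ => sSup (thetaValues φ σ r)) := by
  change Eσ T N (fun σ => sSup (tildeValues φ σ r R)) = _
  simp_rw [sSup_tildeValues φ _ hR, Eσ_const_mul]
  ring

lemma ERCmk_le_ERCtildeR (hs : 0 < s) (hr : 0 < r) (hR : 0 ≤ R) :
    ERCmk H T N φ s r R ≤ ERCtildeR H T N φ r R :=
  Eσ_mono T N fun σ => csSup_le_csSup (tildeValues_bddAbove φ σ hr)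
    ((tildeValues_nonempty φ σ hr hR).smul_set.mono
      (rpow_smul_tildeValues_subset_mkValues φ σ hs.ne'))
    (mkValues_subset_tildeValues φ σ hs hR)

lemma rpow_mul_ERCtildeR_le_ERCmk (hs : 0 < s) (hr : 0 < r) (hR : 0 ≤ R) :
    (T : ℝ) ^ (-s⁻¹) * ERCtildeR H T N φ r R ≤ ERCmk H T N φ s r R := by
  rw [ERCtildeR, ← Eσ_const_mul]
  refine Eσ_mono T N fun σ => ?_
  change _ * sSup (tildeValues φ σ r R) ≤ sSup (mkValues φ σ s r R)
  rw [← smul_eq_mul, ← Real.sSup_smul_of_nonneg (by positivity)]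
  exact csSup_le_csSup ((tildeValues_bddAbove φ σ hr).mono (mkValues_subset_tildeValues φ σ hs hR))
    ((tildeValues_nonempty φ σ hr hR).smul_set) (rpow_smul_tildeValues_subset_mkValues φ σ hs.ne')

lemma tendsto_ERCmk_atTop (hT : 0 < T) (hr : 0 < r) (hR : 0 ≤ R) :
    Tendsto (fun s => ERCmk H T N φ s r R) atTop (𝓝 (ERCtildeR H T N φ r R)) := by
  have hscale : Tendsto (fun s : ℝ => (T : ℝ) ^ (-s⁻¹)) atTop (𝓝 1) := by
    simpa [Function.comp_def] using ((Real.continuousAt_const_rpow (by positivity)).tendsto.comp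
      (tendsto_inv_atTop_zero (𝕜 := ℝ)).neg)
  refine tendsto_of_tendsto_of_tendsto_of_le_of_le' (by simpa using hscale.mul_const _)
    tendsto_const_nhds ?_ ?_
  · exact (eventually_gt_atTop 0).mono fun s hs => rpow_mul_ERCtildeR_le_ERCmk φ hs hr hR
  · exact (eventually_gt_atTop 0).mono fun s hs => ERCmk_le_ERCtildeR φ hs hr hR

end Complexity

theorem erc_tildeR_eq_general {M : ℕ} (H : Fin M → Type*) [∀ m, NormedAddCommGroup (H m)]
    [∀ m, InnerProductSpace ℝ (H m)]
    (T N : ℕ) (hT : 0 < T) (R : ℝ) (hR : 0 < R)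
    (φ : ∀ m, Fin T → Fin N → H m) (r : ℝ) (hr : 1 ≤ r) :
    ERCtildeR H T N φ r R =
        (2 * Real.sqrt R / ((T : ℝ) * N)) *
          Eσ T N (fun σ => sSup {v : ℝ | ∃ θ : Fin M → ℝ,
            (∀ m, 0 ≤ θ m) ∧ (∑ m, θ m ^ r) ≤ 1 ∧
            v = ∑ t, Real.sqrt (∑ m, θ m * ‖∑ i, sgn (σ t i) • φ m t i‖ ^ 2)}) ∧
      ERCtildeR H T N φ r R =
        sSup {v : ℝ | ∃ s : ℝ, 1 ≤ s ∧ v = ERCmk H T N φ s r R} ∧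
      Filter.Tendsto (fun s : ℝ => ERCmk H T N φ s r R) Filter.atTop
        (nhds (ERCtildeR H T N φ r R)) := by
  have hr₀ : 0 < r := zero_lt_one.trans_le hr
  have hlim := tendsto_ERCmk_atTop φ hT hr₀ hR.le
  refine ⟨ERCtildeR_eq_mul_Eσ_sSup_thetaValues φ hR.le, ?_, hlim⟩
  exact eq_sSup_of_tendsto_atTop_of_le
    (fun s hs => ERCmk_le_ERCtildeR φ (zero_lt_one.trans_le hs) hr₀ hR.le) hlim

/-- The equal-radius multi-kernel class `F̃_r` satisfies
`R̂(F̃_r) = (2√R/(TN)) E_σ sup_{θ ⪰ 0, ‖θ‖_r ≤ 1} Σ_t √(Σ_m θ_m ‖Σ_i σ_t^i φ_{m,t}^i‖²)`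
(the `s* = 1` value of the formula for `R̂(F_{s,r})`), hence
`R̂(F̃_r) = sup_{s ≥ 1} R̂(F_{s,r}) = lim_{s→∞} R̂(F_{s,r})`:
`F̃_r` is the `s = +∞` member of the family `F_{s,r}`. -/
theorem erc_tildeR_eq {M : ℕ} (H : Fin M → Type*) [∀ m, NormedAddCommGroup (H m)]
    [∀ m, InnerProductSpace ℝ (H m)]
    (T N : ℕ) (hT : 0 < T) (hN : 0 < N) (hM : 0 < M) (R : ℝ) (hR : 0 < R)
    (φ : ∀ m, Fin T → Fin N → H m) (r : ℝ) (hr : 1 ≤ r) :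
    ERCtildeR H T N φ r R =
        (2 * Real.sqrt R / ((T : ℝ) * N)) *
          Eσ T N (fun σ => sSup {v : ℝ | ∃ θ : Fin M → ℝ,
            (∀ m, 0 ≤ θ m) ∧ (∑ m, θ m ^ r) ≤ 1 ∧
            v = ∑ t, Real.sqrt (∑ m, θ m * ‖∑ i, sgn (σ t i) • φ m t i‖ ^ 2)}) ∧
      ERCtildeR H T N φ r R =
        sSup {v : ℝ | ∃ s : ℝ, 1 ≤ s ∧ v = ERCmk H T N φ s r R} ∧
      Filter.Tendsto (fun s : ℝ => ERCmk H T N φ s r R) Filter.atTop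
        (nhds (ERCtildeR H T N φ r R)) :=
  erc_tildeR_eq_general H T N hT R hR φ r hr

end
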